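/- arXiv:1503.08492 — 2 statements merged into one kernel-verified Lean document; each statement's English description precedes it below -/
import Mathlib

section
/- Let $h$ be a positive odd integer, $k,t$ positive integers with $t$ and $h$ relatively prime and $0 < t < h^k$, and let $x_0 = t/h^k$. Let $m$ be a real number such that for all integers $p,q$ and all nonnegative integers $r,s$, $m \neq \frac{q 2^{r-s} h^k}{p h^k - t 2^r}$ (whenever the denominator is nonzero). Then the line $y = m(x - x_0)$ contains no point of the form $(a/2^c, b/2^d)$ with $a,b$ integers and $c,d$ nonnegative integers. -/
/-!
If the dyadic point `(a / 2^c, b / 2^d)` lay on the line, then `a / 2^c ≠ t / h^k`, because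
`h^k` is odd and does not divide `t`, so `h^k` cannot divide `t * 2^c = a * h^k`. Solving the
line equation for `m` then expresses `m` in exactly the excluded form
`b * 2^(c-d) * h^k / (a * h^k - t * 2^c)`.
-/

theorem Int.not_dvd_mul_two_pow {n t : ℤ} (hn : Odd n) (ht : ¬ n ∣ t) (c : ℕ) :
    ¬ n ∣ t * 2 ^ c :=
  fun hdvd => ht ((Int.isCoprime_two_right.mpr hn).pow_right.dvd_of_dvd_mul_right hdvd)

theorem intCast_mul_sub_mul_two_pow_ne_zero {N t : ℕ} (hN : Odd N) (ht : 0 < t) (htN : t < N)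
    (a : ℤ) (c : ℕ) : (a : ℝ) * N - t * 2 ^ c ≠ 0 := by
  intro hzero
  have hint : a * N = t * 2 ^ c := by exact_mod_cast sub_eq_zero.mp hzero
  have hndvd : ¬ (N : ℤ) ∣ t := by
    exact_mod_cast Nat.not_dvd_of_pos_of_lt ht htN
  exact Int.not_dvd_mul_two_pow (by exact_mod_cast hN) hndvd c ⟨a, by rw [← hint, mul_comm]⟩

theorem slope_eq_of_dyadic_mem_line {N t m : ℝ} (hN : N ≠ 0) {a b : ℤ} {c d : ℕ}
    (hD : a * N - t * 2 ^ c ≠ 0) (hline : b / 2 ^ d = m * (a / 2 ^ c - t / N)) :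
    m = b * (2 : ℝ) ^ ((c : ℤ) - d) * N / (a * N - t * 2 ^ c) := by
  have hsub : (a : ℝ) / 2 ^ c - t / N = (a * N - t * 2 ^ c) / (2 ^ c * N) := by
    field_simp
  rw [hsub, mul_div, eq_div_iff (by positivity)] at hline
  rw [zpow_sub₀ two_ne_zero, zpow_natCast, zpow_natCast, eq_div_iff hD, ← hline]
  ring

theorem stmt0_general (h k t : ℕ) (hh : Odd h) (ht : 0 < t)
    (htlt : t < h ^ k)
    (x0 : ℝ) (hx0 : x0 = (t : ℝ) / (h : ℝ) ^ k)
    (m : ℝ)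
    (hm : ∀ (p q : ℤ) (r s : ℕ), (p : ℝ) * (h : ℝ) ^ k - (t : ℝ) * 2 ^ r ≠ 0 →
      m ≠ (q : ℝ) * (2 : ℝ) ^ ((r : ℤ) - (s : ℤ)) * (h : ℝ) ^ k /
        ((p : ℝ) * (h : ℝ) ^ k - (t : ℝ) * 2 ^ r)) :
    ∀ (a b : ℤ) (c d : ℕ), (b : ℝ) / 2 ^ d ≠ m * ((a : ℝ) / 2 ^ c - x0) := by
  intro a b c d hline
  have hD : (a : ℝ) * (h : ℝ) ^ k - t * 2 ^ c ≠ 0 := by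
    exact_mod_cast intCast_mul_sub_mul_two_pow_ne_zero (hh.pow (n := k)) ht htlt a c
  have hN : (h : ℝ) ^ k ≠ 0 := by exact_mod_cast (ht.trans htlt).ne'
  exact hm a b c d hD (slope_eq_of_dyadic_mem_line hN hD (hx0 ▸ hline))

theorem stmt0 (h k t : ℕ) (hh : Odd h) (hhpos : 0 < h) (hk : 0 < k) (ht : 0 < t)
    (hcop : Nat.Coprime t h) (htlt : t < h ^ k)
    (x0 : ℝ) (hx0 : x0 = (t : ℝ) / (h : ℝ) ^ k)
    (m : ℝ)
    (hm : ∀ (p q : ℤ) (r s : ℕ), (p : ℝ) * (h : ℝ) ^ k - (t : ℝ) * 2 ^ r ≠ 0 →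
      m ≠ (q : ℝ) * (2 : ℝ) ^ ((r : ℤ) - (s : ℤ)) * (h : ℝ) ^ k /
        ((p : ℝ) * (h : ℝ) ^ k - (t : ℝ) * 2 ^ r)) :
    ∀ (a b : ℤ) (c d : ℕ), (b : ℝ) / 2 ^ d ≠ m * ((a : ℝ) / 2 ^ c - x0) :=
  stmt0_general h k t hh ht htlt x0 hx0 m hm
end

section
/- Let $h$ be a positive odd integer, $k,t$ positive integers with $t$ and $h$ relatively prime and $0 < t < h^k$, and let $x_0 = t/h^k$. Let $m = \frac{2^\gamma}{(2\alpha+1)^\beta}$ where $\alpha, \beta, \gamma$ are nonnegative integers. Then for every integers $p, q$ and nonnegative integers $r, s$, the point $(p/2^r, q/2^s)$ does not lie on the line $y = m(x - x_0)$. -/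
theorem stmt1 (h k t : ℕ) (hh : Odd h) (hhpos : 0 < h) (hk : 0 < k) (ht : 0 < t)
    (hcop : Nat.Coprime t h) (htlt : t < h ^ k)
    (x0 : ℝ) (hx0 : x0 = (t : ℝ) / (h : ℝ) ^ k)
    (α β γ : ℕ) (m : ℝ) (hm : m = (2 : ℝ) ^ γ / ((2 * (α : ℝ) + 1) ^ β)) :
    ∀ (p q : ℤ) (r s : ℕ), (q : ℝ) / 2 ^ s ≠ m * ((p : ℝ) / 2 ^ r - x0) := by
  intro p q r s heq
  have hb : ((2 * (α : ℝ) + 1) ^ β) ≠ 0 := by positivity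
  have hhR : ((h : ℝ)) ≠ 0 := by positivity
  rw [hm, hx0] at heq
  field_simp at heq
  have key : (t : ℤ) * 2 ^ (r + s + γ)
      = (p * 2 ^ (s + γ) - q * (2 * α + 1) ^ β * 2 ^ r) * (h : ℤ) ^ k := by
    have keyR : (t : ℝ) * 2 ^ (r + s + γ)
        = ((p : ℝ) * 2 ^ (s + γ) - (q : ℝ) * (2 * (α : ℝ) + 1) ^ β * 2 ^ r) * (h : ℝ) ^ k := by
      rw [pow_add, pow_add, pow_add]
      linear_combination heq
    exact_mod_cast keyR
  have hdvd : (h : ℤ) ^ k ∣ (t : ℤ) * 2 ^ (r + s + γ) :=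
    ⟨p * 2 ^ (s + γ) - q * (2 * α + 1) ^ β * 2 ^ r, by rw [key]; ring⟩
  have hdvdN : h ^ k ∣ t * 2 ^ (r + s + γ) := by exact_mod_cast hdvd
  have hcop2 : Nat.Coprime h 2 := hh.coprime_two_right
  have hc : Nat.Coprime (h ^ k) (t * 2 ^ (r + s + γ)) :=
    Nat.Coprime.pow_left _ (Nat.Coprime.mul_right hcop.symm (hcop2.pow_right _))
  have h1 : h ^ k = 1 := Nat.Coprime.eq_one_of_dvd hc hdvdN
  omega
end
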